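/- For every λ < 0, ∫₀¹ t · (|λ| / √(2π t (1−t)³)) · exp(−λ² t / (2(1−t))) dt = 1 − |λ| · exp(λ²/2) · ∫_{|λ|}^{∞} exp(−s²/2) ds. (Equivalently, the mean of the density f_{Z^λ} equals 1 − |λ| e^{λ²/2} ∫_{|λ|}^∞ e^{−s²/2} ds; this value is also the probability that the Vervaat bridge V(B^{λ,br}) stays above the line t ↦ λt.) -/

import Mathlib

open MeasureTheory Real

/-! With `a = |λ|`, the substitution `t = u² / (a² + u²)` turns the mean into
`√(2/π) ∫₀^∞ u² / (a² + u²) e^{-u²/2} du`. Splitting `u² / (a² + u²) = 1 - a² / (a² + u²)`,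
the first part is half a Gaussian integral. For the second, `a² / (a² + u²)` is written as a
Laplace integral; after Fubini the inner integral over `u` is again Gaussian and leaves the
Gaussian tail `∫_a^∞ e^{-s²/2} ds`. -/

open Set Filter Topology

lemma integral_Ioi_mul_exp_neg_mul_sq {b : ℝ} (hb : 0 < b) (a : ℝ) :
    ∫ x in Ioi a, x * exp (-b * x ^ 2) = exp (-b * a ^ 2) / (2 * b) := by
  have hderiv (x : ℝ) : HasDerivAt (fun x => exp (-b * x ^ 2) / -(2 * b))
      (x * exp (-b * x ^ 2)) x :=
    (((hasDerivAt_pow 2 x).const_mul (-b)).exp.div_const _).congr_deriv (by field_simp; ring)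
  have hlim : Tendsto (fun x => exp (-b * x ^ 2) / -(2 * b)) atTop (𝓝 (0 / -(2 * b))) :=
    (tendsto_exp_atBot.comp ((tendsto_pow_atTop two_ne_zero).const_mul_atTop_of_neg
      (neg_lt_zero.2 hb))).div_const _
  rw [integral_Ioi_of_hasDerivAt_of_tendsto' (fun x _ => hderiv x)
    (integrable_mul_exp_neg_mul_sq hb).integrableOn hlim]
  ring

lemma integral_Ioi_exp_neg_sq_div_two :
    ∫ u in Ioi (0 : ℝ), exp (-u ^ 2 / 2) = √(2 * π) / 2 := by
  have h := integral_gaussian_Ioi (1 / 2)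
  rw [show π / (1 / 2) = 2 * π by ring] at h
  rw [← h]
  congr with u
  ring_nf

lemma integrable_exp_neg_sq_div_two : Integrable fun u : ℝ => exp (-u ^ 2 / 2) := by
  convert integrable_exp_neg_mul_sq (b := 1 / 2) (by norm_num) using 2 with u
  ring_nf

section sqDivAddSq

variable {c : ℝ}

lemma hasDerivAt_sq_div_add_sq (hc : 0 < c) (u : ℝ) :
    HasDerivAt (fun u => u ^ 2 / (c + u ^ 2)) (2 * c * u / (c + u ^ 2) ^ 2) u := by
  have hsq : HasDerivAt (fun u : ℝ => u ^ 2) (2 * u) u := by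
    simpa using hasDerivAt_pow 2 u
  exact (hsq.div (hsq.const_add c) (by positivity)).congr_deriv (by ring)

lemma strictMonoOn_sq_div_add_sq (hc : 0 < c) :
    StrictMonoOn (fun u : ℝ => u ^ 2 / (c + u ^ 2)) (Ici 0) := by
  intro u (hu : 0 ≤ u) v _ huv
  simp only
  rw [div_lt_div_iff₀ (by positivity) (by positivity)]
  nlinarith [pow_lt_pow_left₀ huv hu two_ne_zero]

lemma image_sq_div_add_sq_Ioi (hc : 0 < c) :
    (fun u : ℝ => u ^ 2 / (c + u ^ 2)) '' Ioi 0 = Ioo 0 1 := by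
  ext t
  simp only [mem_image, mem_Ioi, mem_Ioo]
  constructor
  · rintro ⟨u, hu, rfl⟩
    exact ⟨by positivity, by rw [div_lt_one (by positivity)]; linarith⟩
  · rintro ⟨ht0, ht1⟩
    have h1t : 0 < 1 - t := by linarith
    refine ⟨√(c * t / (1 - t)), by positivity, ?_⟩
    rw [sq_sqrt (by positivity)]
    field_simp
    ring

end sqDivAddSq

-- `f_{Z^λ}` of the paper.
noncomputable def returnTimeDensity (lam t : ℝ) : ℝ :=
  |lam| / √(2 * π * t * (1 - t) ^ 3) * exp (-(lam ^ 2 * t) / (2 * (1 - t)))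

lemma returnTimeDensity_abs (lam t : ℝ) : returnTimeDensity |lam| t = returnTimeDensity lam t := by
  simp only [returnTimeDensity, abs_abs, sq_abs]

lemma abs_deriv_mul_returnTimeDensity {a u : ℝ} (ha : 0 < a) (hu : 0 < u) :
    |2 * a ^ 2 * u / (a ^ 2 + u ^ 2) ^ 2| * (u ^ 2 / (a ^ 2 + u ^ 2) *
      returnTimeDensity a (u ^ 2 / (a ^ 2 + u ^ 2))) =
      2 / √(2 * π) * (u ^ 2 / (a ^ 2 + u ^ 2) * exp (-u ^ 2 / 2)) := by
  have hq : 0 < a ^ 2 + u ^ 2 := by positivity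
  have hcompl : 1 - u ^ 2 / (a ^ 2 + u ^ 2) = a ^ 2 / (a ^ 2 + u ^ 2) := by
    field_simp
    ring
  have hsqrt : √(2 * π * (u ^ 2 / (a ^ 2 + u ^ 2)) * (a ^ 2 / (a ^ 2 + u ^ 2)) ^ 3) =
      √(2 * π) * (u * a ^ 3 / (a ^ 2 + u ^ 2) ^ 2) := by
    rw [← sqrt_sq (by positivity : 0 ≤ u * a ^ 3 / (a ^ 2 + u ^ 2) ^ 2), ← sqrt_mul (by positivity)]
    congr 1
    field_simp
  have hexp : -(a ^ 2 * (u ^ 2 / (a ^ 2 + u ^ 2))) / (2 * (a ^ 2 / (a ^ 2 + u ^ 2))) =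
      -u ^ 2 / 2 := by
    field_simp
  rw [returnTimeDensity, hcompl, hsqrt, hexp, abs_of_pos ha, abs_of_pos (by positivity)]
  field_simp

lemma integral_Ioo_mul_returnTimeDensity {a : ℝ} (ha : 0 < a) :
    ∫ t in Ioo 0 1, t * returnTimeDensity a t =
      2 / √(2 * π) * ∫ u in Ioi 0, u ^ 2 / (a ^ 2 + u ^ 2) * exp (-u ^ 2 / 2) := by
  have ha2 : 0 < a ^ 2 := by positivity
  rw [← image_sq_div_add_sq_Ioi ha2, integral_image_eq_integral_abs_deriv_smul measurableSet_Ioi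
    (fun u _ => (hasDerivAt_sq_div_add_sq ha2 u).hasDerivWithinAt)
    ((strictMonoOn_sq_div_add_sq ha2).injOn.mono Ioi_subset_Ici_self), ← integral_const_mul]
  exact setIntegral_congr_fun measurableSet_Ioi fun u hu =>
    abs_deriv_mul_returnTimeDensity ha hu

/-- With `v = s² / (2a²)` this is `e^{a²/2} a² e^{-(a² + u²) v} dv/ds`, from the Laplace
representation `a² / (a² + u²) = ∫ a² e^{-(a² + u²) v} dv`. -/
noncomputable def laplaceKernel (a u s : ℝ) : ℝ :=
  exp (a ^ 2 / 2) * s * exp (-((a ^ 2 + u ^ 2) / (2 * a ^ 2)) * s ^ 2)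

section laplaceKernel

variable {a : ℝ}

lemma laplaceKernel_eq_mul_gaussian (u s : ℝ) (ha : a ≠ 0) :
    laplaceKernel a u s =
      exp (a ^ 2 / 2) * s * exp (-s ^ 2 / 2) * exp (-(s ^ 2 / (2 * a ^ 2)) * u ^ 2) := by
  rw [laplaceKernel, mul_assoc _ (exp _), ← exp_add]
  congr 3
  field_simp
  ring

lemma integral_laplaceKernel_Ioi_snd (ha : 0 < a) (u : ℝ) :
    ∫ s in Ioi a, laplaceKernel a u s = a ^ 2 / (a ^ 2 + u ^ 2) * exp (-u ^ 2 / 2) := by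
  have hb : 0 < (a ^ 2 + u ^ 2) / (2 * a ^ 2) := by positivity
  simp only [laplaceKernel, mul_assoc, integral_const_mul, integral_Ioi_mul_exp_neg_mul_sq hb]
  rw [mul_div_assoc', ← exp_add]
  field_simp
  ring_nf

lemma integral_laplaceKernel_Ioi_fst (ha : 0 < a) {s : ℝ} (hs : 0 < s) :
    ∫ u in Ioi 0, laplaceKernel a u s = √(2 * π) / 2 * a * exp (a ^ 2 / 2) * exp (-s ^ 2 / 2) := by
  have hsqrt : √(π / (s ^ 2 / (2 * a ^ 2))) = a / s * √(2 * π) := by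
    rw [show π / (s ^ 2 / (2 * a ^ 2)) = (a / s) ^ 2 * (2 * π) by field_simp,
      sqrt_mul (by positivity), sqrt_sq (by positivity)]
  simp only [laplaceKernel_eq_mul_gaussian _ s ha.ne', integral_const_mul,
    integral_gaussian_Ioi, hsqrt]
  field_simp

lemma integrable_laplaceKernel (ha : 0 < a) :
    Integrable (Function.uncurry (laplaceKernel a))
      ((volume.restrict (Ioi 0)).prod (volume.restrict (Ioi a))) := by
  have hcont : Continuous (Function.uncurry (laplaceKernel a)) := by
    unfold laplaceKernel; fun_prop
  refine (integrable_prod_iff' hcont.aestronglyMeasurable).2 ⟨?_, ?_⟩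
  · filter_upwards [ae_restrict_mem measurableSet_Ioi] with s (hs : a < s)
    simp only [Function.uncurry_apply_pair, laplaceKernel_eq_mul_gaussian _ s ha.ne']
    exact ((integrable_exp_neg_mul_sq
      (div_pos (pow_pos (ha.trans hs) 2) (by positivity))).const_mul _).restrict
  · refine (integrable_exp_neg_sq_div_two.const_mul
      (√(2 * π) / 2 * a * exp (a ^ 2 / 2))).restrict.congr ?_
    filter_upwards [ae_restrict_mem measurableSet_Ioi] with s (hs : a < s)
    have hs0 : 0 < s := ha.trans hs
    rw [← integral_laplaceKernel_Ioi_fst ha hs0]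
    exact setIntegral_congr_fun measurableSet_Ioi fun u _ =>
      (norm_of_nonneg (mul_nonneg (mul_nonneg (exp_pos _).le hs0.le) (exp_pos _).le)).symm

lemma integrableOn_div_sq_add_sq_mul_exp (ha : 0 < a) :
    IntegrableOn (fun u => a ^ 2 / (a ^ 2 + u ^ 2) * exp (-u ^ 2 / 2)) (Ioi 0) :=
  (integrable_laplaceKernel ha).integral_prod_left.congr
    (ae_of_all _ fun u => integral_laplaceKernel_Ioi_snd ha u)

lemma integral_Ioi_div_sq_add_sq_mul_exp (ha : 0 < a) :
    ∫ u in Ioi 0, a ^ 2 / (a ^ 2 + u ^ 2) * exp (-u ^ 2 / 2) =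
      √(2 * π) / 2 * a * exp (a ^ 2 / 2) * ∫ s in Ioi a, exp (-s ^ 2 / 2) := by
  calc ∫ u in Ioi 0, a ^ 2 / (a ^ 2 + u ^ 2) * exp (-u ^ 2 / 2)
      = ∫ u in Ioi 0, ∫ s in Ioi a, laplaceKernel a u s := by
        simp only [integral_laplaceKernel_Ioi_snd ha]
    _ = ∫ s in Ioi a, ∫ u in Ioi 0, laplaceKernel a u s :=
        integral_integral_swap (integrable_laplaceKernel ha)
    _ = ∫ s in Ioi a, √(2 * π) / 2 * a * exp (a ^ 2 / 2) * exp (-s ^ 2 / 2) :=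
        setIntegral_congr_fun measurableSet_Ioi fun s hs =>
          integral_laplaceKernel_Ioi_fst ha (ha.trans hs)
    _ = _ := integral_const_mul _ _

end laplaceKernel

lemma integral_Ioi_sq_div_sq_add_sq_mul_exp {a : ℝ} (ha : 0 < a) :
    ∫ u in Ioi 0, u ^ 2 / (a ^ 2 + u ^ 2) * exp (-u ^ 2 / 2) =
      √(2 * π) / 2 * (1 - a * exp (a ^ 2 / 2) * ∫ s in Ioi a, exp (-s ^ 2 / 2)) := by
  have hsplit (u : ℝ) : u ^ 2 / (a ^ 2 + u ^ 2) * exp (-u ^ 2 / 2) =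
      exp (-u ^ 2 / 2) - a ^ 2 / (a ^ 2 + u ^ 2) * exp (-u ^ 2 / 2) := by
    field_simp
    ring
  simp only [hsplit]
  rw [integral_sub integrable_exp_neg_sq_div_two.integrableOn
      (integrableOn_div_sq_add_sq_mul_exp ha),
    integral_Ioi_exp_neg_sq_div_two, integral_Ioi_div_sq_add_sq_mul_exp ha]
  ring

/-- the mean of the density `f_{Z^λ}` equals
`1 − |λ| e^{λ²/2} ∫_{|λ|}^∞ e^{−s²/2} ds`. -/
theorem fZ_mean (lam : ℝ) (hlam : lam < 0) :
    ∫ t in Set.Ioo (0 : ℝ) 1,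
        t * (|lam| / Real.sqrt (2 * π * t * (1 - t) ^ 3) *
          Real.exp (-(lam ^ 2 * t) / (2 * (1 - t)))) =
      1 - |lam| * Real.exp (lam ^ 2 / 2) *
        ∫ s in Set.Ioi |lam|, Real.exp (-s ^ 2 / 2) := by
  have ha : 0 < |lam| := abs_pos.2 hlam.ne
  change ∫ t in Ioo 0 1, t * returnTimeDensity lam t = _
  simp_rw [← returnTimeDensity_abs lam]
  rw [integral_Ioo_mul_returnTimeDensity ha, integral_Ioi_sq_div_sq_add_sq_mul_exp ha, sq_abs]
  field_simp
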